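/- Let Y be a finite label set, f : ℝ^d → Y measurable, σ > 0, and p₀ ∈ (0,1). If x ∈ ℝ^d and y ∈ Y satisfy p₀ < p_{f,σ}(x, y) < 1, then for every δ ∈ ℝ^d with ‖δ‖ < σ·(Φ⁻¹(p_{f,σ}(x, y)) − Φ⁻¹(p₀)), one has p_{f,σ}(x + δ, y) > p₀. -/

import Mathlib

/-!
Rescaling by `σ` reduces everything to the standard Gaussian `γ` on `ℝ^d`. By the
Cameron–Martin formula, the translate of `γ` by `v` has density `exp (⟪v, z⟫ - ‖v‖² / 2)` with
respect to `γ`, an increasing function of `⟪u, z⟫` for `u = v / ‖v‖`. By the Neyman–Pearson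
argument, among all sets of `γ`-measure `p` the half-space `{⟪u, z⟫ ≤ Φ⁻¹ p}` has the smallest
translated measure, namely `Φ (Φ⁻¹ p - ‖v‖)`, since `⟪u, z⟫` is standard normal under `γ`.
So `p_{f,σ}(x + δ, y) ≥ Φ (Φ⁻¹ p - ‖δ‖ / σ) > Φ (Φ⁻¹ p₀) = p₀`.
-/

open MeasureTheory ProbabilityTheory

/-- The standard Gaussian CDF `Φ`. -/
noncomputable def stdGaussianCDF (a : ℝ) : ℝ :=
  ((gaussianReal 0 1) (Set.Iic a)).toReal

/-- The inverse `Φ⁻¹` of the standard Gaussian CDF (on `(0,1)`). -/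
noncomputable def stdGaussianCDFInv (p : ℝ) : ℝ :=
  sSup {a : ℝ | stdGaussianCDF a ≤ p}

/-- The Gaussian measure `N(0, σ²I)` on `ℝ^d` (with the Euclidean norm), obtained as the
`d`-fold product of the real Gaussian measure with mean `0` and variance `σ²`. -/
noncomputable def gaussianE (d : ℕ) (σ : ℝ) : Measure (EuclideanSpace ℝ (Fin d)) :=
  (Measure.pi fun _ : Fin d => gaussianReal 0 ⟨σ ^ 2, sq_nonneg σ⟩).map
    (MeasurableEquiv.toLp 2 (Fin d → ℝ))

/-- The smoothed confidence `p_{f,σ}(x, y) = N(0, σ²I)({δ : f(x + δ) = y})`. -/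
noncomputable def smoothedConf {d : ℕ} {Y : Type*} (f : EuclideanSpace ℝ (Fin d) → Y)
    (σ : ℝ) (x : EuclideanSpace ℝ (Fin d)) (y : Y) : ℝ :=
  (gaussianE d σ {δ | f (x + δ) = y}).toReal

open Set Filter Real Complex Module
open scoped ENNReal NNReal RealInnerProductSpace

namespace ProbabilityTheory

variable {μ : Measure ℝ} [IsProbabilityMeasure μ]

lemma continuous_cdf [NullSingletonClass μ] : Continuous (cdf μ) := by
  refine continuous_iff_continuousAt.2 fun a ↦
    (monotone_cdf μ).continuousAt_iff_leftLim_eq_rightLim.2 ?_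
  have h := (cdf μ).measure_singleton a
  rw [measure_cdf, measure_singleton, eq_comm, ENNReal.ofReal_eq_zero, sub_nonpos] at h
  rw [StieltjesFunction.rightLim_eq]
  exact le_antisymm ((monotone_cdf μ).leftLim_le le_rfl) h

lemma strictMono_cdf (h : volume ≪ μ) : StrictMono (cdf μ) := by
  intro a b hab
  have hpos : (cdf μ).measure (Ioc a b) ≠ 0 := by
    rw [measure_cdf]
    exact fun h0 ↦ hab.not_ge (by simpa using h h0)
  rwa [StieltjesFunction.measure_Ioc, Ne, ENNReal.ofReal_eq_zero, not_le, sub_pos] at hpos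

end ProbabilityTheory

lemma stdGaussianCDF_eq_cdf : stdGaussianCDF = cdf (gaussianReal 0 1) := by
  ext a
  rw [cdf_eq_real, measureReal_def, stdGaussianCDF]

lemma continuous_stdGaussianCDF : Continuous stdGaussianCDF := by
  have := nullSingletonClass_gaussianReal (μ := 0) one_ne_zero
  rw [stdGaussianCDF_eq_cdf]
  exact continuous_cdf

lemma strictMono_stdGaussianCDF : StrictMono stdGaussianCDF := by
  rw [stdGaussianCDF_eq_cdf]
  exact strictMono_cdf (gaussianReal_absolutelyContinuous' 0 one_ne_zero)

lemma stdGaussianCDF_stdGaussianCDFInv {p : ℝ} (hp : p ∈ Ioo 0 1) :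
    stdGaussianCDF (stdGaussianCDFInv p) = p := by
  obtain ⟨a, ha⟩ :=
    ((stdGaussianCDF_eq_cdf ▸ tendsto_cdf_atBot _).eventually_lt_const hp.1).exists
  obtain ⟨b, hb⟩ :=
    ((stdGaussianCDF_eq_cdf ▸ tendsto_cdf_atTop _).eventually_const_lt hp.2).exists
  obtain ⟨c, rfl⟩ : p ∈ range stdGaussianCDF :=
    intermediate_value_univ a b continuous_stdGaussianCDF ⟨ha.le, hb.le⟩
  have hS : {a | stdGaussianCDF a ≤ stdGaussianCDF c} = Iic c := by
    ext
    exact strictMono_stdGaussianCDF.le_iff_le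
  rw [stdGaussianCDFInv, hS, csSup_Iic]

-- The Neyman–Pearson lemma.
lemma setLIntegral_preimage_Iic_le {Ω : Type*} [MeasurableSpace Ω] {μ : Measure Ω}
    [IsFiniteMeasure μ] {T : Ω → ℝ} (hT : Measurable T) {g : ℝ → ℝ≥0∞} (hg : Monotone g)
    {A : Set Ω} (hA : MeasurableSet A) {t : ℝ} (hμ : μ A = μ (T ⁻¹' Iic t)) :
    ∫⁻ ω in T ⁻¹' Iic t, g (T ω) ∂μ ≤ ∫⁻ ω in A, g (T ω) ∂μ := by
  set H := T ⁻¹' Iic t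
  have hH : MeasurableSet H := hT measurableSet_Iic
  have hdiff : μ (H \ A) = μ (A \ H) := by
    have h := (measure_inter_add_sdiff H hA).trans
      (hμ.symm.trans (measure_inter_add_sdiff A hH).symm)
    rwa [inter_comm, ENNReal.add_right_inj (measure_ne_top μ _)] at h
  have hHA : ∫⁻ ω in H \ A, g (T ω) ∂μ ≤ g t * μ (H \ A) := by
    rw [← setLIntegral_const]
    exact setLIntegral_mono' (hH.diff hA) fun ω hω ↦ hg hω.1
  have hAH : g t * μ (A \ H) ≤ ∫⁻ ω in A \ H, g (T ω) ∂μ := by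
    rw [← setLIntegral_const]
    exact setLIntegral_mono' (hA.diff hH) fun ω hω ↦ hg (not_le.1 hω.2).le
  calc ∫⁻ ω in H, g (T ω) ∂μ
      = ∫⁻ ω in H ∩ A, g (T ω) ∂μ + ∫⁻ ω in H \ A, g (T ω) ∂μ :=
        (lintegral_inter_add_sdiff _ H hA).symm
    _ ≤ ∫⁻ ω in A ∩ H, g (T ω) ∂μ + ∫⁻ ω in A \ H, g (T ω) ∂μ := by
        rw [inter_comm]
        exact add_le_add le_rfl (hHA.trans (hdiff ▸ hAH))
    _ = ∫⁻ ω in A, g (T ω) ∂μ := lintegral_inter_add_sdiff _ A hH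

lemma MeasureTheory.Measure.map_add_right_withDensity {G : Type*} [MeasurableSpace G]
    [AddGroup G] [MeasurableAdd G] (μ : Measure G) [μ.IsAddRightInvariant] (f : G → ℝ≥0∞)
    (a : G) : (μ.withDensity f).map (· + a) = μ.withDensity fun x ↦ f (x - a) := by
  ext s hs
  rw [map_apply (measurable_add_const a) hs, withDensity_apply _ (measurable_add_const a hs),
    withDensity_apply _ hs]
  simpa using (measurePreserving_add_right μ a).setLIntegral_comp_preimage_emb
    (MeasurableEquiv.addRight a).measurableEmbedding (fun x ↦ f (x - a)) s

section stdGaussian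

variable {V : Type*} [NormedAddCommGroup V] [InnerProductSpace ℝ V] [FiniteDimensional ℝ V]
  [MeasurableSpace V] [BorelSpace V]

lemma stdGaussian_eq_withDensity : stdGaussian V = volume.withDensity fun x ↦
    ENNReal.ofReal (((2 * π) ^ ((finrank ℝ V : ℝ) / 2))⁻¹ * Real.exp (-‖x‖ ^ 2 / 2)) := by
  set c : ℝ := ((2 * π) ^ ((finrank ℝ V : ℝ) / 2))⁻¹
  have hc : (2 * π) ^ ((finrank ℝ V : ℝ) / 2) ≠ 0 := by positivity
  have hmass : ∫ x : V, c * Real.exp (-‖x‖ ^ 2 / 2) = 1 := by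
    have h := GaussianFourier.integral_rexp_neg_mul_sq_norm (V := V) (b := 1 / 2) (by norm_num)
    simp only [neg_mul, one_div, ← div_eq_inv_mul, ← neg_div] at h
    rw [integral_const_mul, h, div_inv_eq_mul, mul_comm π 2]
    exact inv_mul_cancel₀ hc
  have : IsProbabilityMeasure (volume.withDensity fun x : V ↦
      ENNReal.ofReal (c * Real.exp (-‖x‖ ^ 2 / 2))) := by
    refine ⟨?_⟩
    rw [withDensity_apply _ MeasurableSet.univ, Measure.restrict_univ,
      ← ofReal_integral_eq_lintegral_ofReal (.of_integral_ne_zero (hmass ▸ one_ne_zero))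
        (ae_of_all _ fun x ↦ by positivity), hmass, ENNReal.ofReal_one]
  refine Measure.ext_of_charFun (funext fun t ↦ ?_)
  rw [charFun_stdGaussian, charFun_apply, integral_withDensity_eq_integral_toReal_smul
    (by fun_prop) (ae_of_all _ fun _ ↦ ENNReal.ofReal_lt_top)]
  simp only [ENNReal.toReal_ofReal (by positivity : 0 ≤ c * Real.exp _)]
  have hpow : ((π : ℂ) / (1 / 2)) ^ ((finrank ℝ V : ℂ) / 2) =
      ((2 * π) ^ ((finrank ℝ V : ℝ) / 2) : ℝ) := by
    rw [ofReal_cpow (by positivity)]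
    push_cast
    ring_nf
  symm
  calc ∫ x : V, (c * Real.exp (-‖x‖ ^ 2 / 2)) • cexp (⟪x, t⟫ * I)
      = c * ∫ x : V, cexp (-(1 / 2) * ‖x‖ ^ 2 + I * ⟪t, x⟫) := by
        rw [← integral_const_mul]
        congr 1 with x
        rw [Complex.real_smul, ofReal_mul, ofReal_exp, mul_assoc, ← Complex.exp_add,
          real_inner_comm]
        push_cast
        ring_nf
    _ = cexp (-‖t‖ ^ 2 / 2) := by
        rw [GaussianFourier.integral_cexp_neg_mul_sq_norm_add (by norm_num), hpow, ← mul_assoc,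
          ← ofReal_mul, inv_mul_cancel₀ hc, ofReal_one, one_mul, I_sq]
        ring_nf

-- The Cameron–Martin formula.
lemma stdGaussian_map_add (a : V) :
    (stdGaussian V).map (· + a) =
      (stdGaussian V).withDensity fun x ↦ ENNReal.ofReal (Real.exp (⟪a, x⟫ - ‖a‖ ^ 2 / 2)) := by
  rw [stdGaussian_eq_withDensity, Measure.map_add_right_withDensity,
    ← withDensity_mul _ (by fun_prop) (by fun_prop)]
  congr 1 with x
  rw [Pi.mul_apply, ← ENNReal.ofReal_mul (by positivity), mul_assoc, ← Real.exp_add,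
    norm_sub_sq_real, real_inner_comm]
  ring_nf

lemma stdGaussian_map_inner (u : V) :
    (stdGaussian V).map (fun x ↦ ⟪u, x⟫) = gaussianReal 0 (‖u‖₊ ^ 2) := by
  have h := IsGaussian.map_eq_gaussianReal (μ := stdGaussian V) (innerSL ℝ u)
  rw [integral_strongDual_stdGaussian, variance_dual_stdGaussian, innerSL_apply_norm] at h
  convert h using 2 <;> ext <;> simp

lemma stdGaussian_inner_le {u : V} (hu : ‖u‖ = 1) (t : ℝ) :
    (stdGaussian V {x | ⟪u, x⟫ ≤ t}).toReal = stdGaussianCDF t := by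
  rw [show {x | ⟪u, x⟫ ≤ t} = (fun x ↦ ⟪u, x⟫) ⁻¹' Iic t from rfl,
    ← Measure.map_apply (by fun_prop) measurableSet_Iic, stdGaussian_map_inner, stdGaussianCDF]
  congr
  ext
  simp [hu]

lemma stdGaussianCDF_inv_sub_norm_le_measure_preimage_add {A : Set V} (hA : MeasurableSet A)
    (hp : (stdGaussian V A).toReal ∈ Ioo 0 1) (v : V) :
    stdGaussianCDF (stdGaussianCDFInv (stdGaussian V A).toReal - ‖v‖) ≤
      (stdGaussian V ((· + v) ⁻¹' A)).toReal := by
  rcases eq_or_ne v 0 with rfl | hv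
  · simp [stdGaussianCDF_stdGaussianCDFInv hp]
  set t := stdGaussianCDFInv (stdGaussian V A).toReal
  set u := ‖v‖⁻¹ • v
  have hu : ‖u‖ = 1 := norm_smul_inv_norm hv
  have hvu : ∀ x, ⟪v, x⟫ = ‖v‖ * ⟪u, x⟫ := fun x ↦ by
    rw [real_inner_smul_left, ← mul_assoc, mul_inv_cancel₀ (norm_ne_zero_iff.2 hv), one_mul]
  have huv : ⟪u, v⟫ = ‖v‖ := by
    rw [real_inner_smul_left, real_inner_self_eq_norm_sq]
    field_simp
  have hT : Measurable fun x ↦ ⟪u, x⟫ := by fun_prop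
  have hAH : stdGaussian V A = stdGaussian V ((fun x ↦ ⟪u, x⟫) ⁻¹' Iic t) := by
    rw [← ENNReal.toReal_eq_toReal_iff' (measure_ne_top _ _) (measure_ne_top _ _)]
    exact (stdGaussianCDF_stdGaussianCDFInv hp).symm.trans (stdGaussian_inner_le hu t).symm
  have hshift : (· + v) ⁻¹' ((fun x ↦ ⟪u, x⟫) ⁻¹' Iic t) = {x | ⟪u, x⟫ ≤ t - ‖v‖} := by
    ext x
    simp [inner_add_right, huv, le_sub_iff_add_le]
  have hdensity := stdGaussian_map_add v
  simp_rw [hvu] at hdensity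
  have hNP := setLIntegral_preimage_Iic_le hT
    (g := fun s ↦ ENNReal.ofReal (Real.exp (‖v‖ * s - ‖v‖ ^ 2 / 2)))
    (fun a b hab ↦ ENNReal.ofReal_le_ofReal (Real.exp_le_exp.2 (by gcongr))) hA hAH
  rw [← withDensity_apply _ hA, ← withDensity_apply _ (hT measurableSet_Iic), ← hdensity,
    Measure.map_apply (measurable_add_const v) hA,
    Measure.map_apply (measurable_add_const v) (hT measurableSet_Iic), hshift] at hNP
  rw [← stdGaussian_inner_le hu]
  exact ENNReal.toReal_mono (measure_ne_top _ _) hNP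

end stdGaussian

lemma gaussianE_eq_map_smul_stdGaussian (d : ℕ) (σ : ℝ) :
    gaussianE d σ = (stdGaussian (EuclideanSpace ℝ (Fin d))).map (σ • ·) := by
  have h : gaussianReal 0 ⟨σ ^ 2, sq_nonneg σ⟩ = (gaussianReal 0 1).map (σ * ·) := by
    rw [gaussianReal_map_const_mul, mul_zero, mul_one]
    rfl
  rw [gaussianE, ← map_pi_eq_stdGaussian, Measure.map_map (by fun_prop) (by fun_prop), h,
    ← Measure.pi_map_pi (fun _ ↦ by fun_prop), Measure.map_map (by fun_prop) (by fun_prop)]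
  rfl

lemma smoothedConf_eq_stdGaussian {d : ℕ} {Y : Type*} [MeasurableSpace Y]
    [MeasurableSingletonClass Y] {f : EuclideanSpace ℝ (Fin d) → Y} (hf : Measurable f) (σ : ℝ)
    (x : EuclideanSpace ℝ (Fin d)) (y : Y) :
    smoothedConf f σ x y = (stdGaussian _ {z | f (x + σ • z) = y}).toReal := by
  rw [smoothedConf, gaussianE_eq_map_smul_stdGaussian,
    Measure.map_apply (by fun_prop) (show MeasurableSet {δ | f (x + δ) = y} from
      (hf.comp (measurable_const_add x)) (measurableSet_singleton y))]
  rfl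

theorem stmt_1_general {d : ℕ} {Y : Type*} [MeasurableSpace Y] [MeasurableSingletonClass Y]
    (f : EuclideanSpace ℝ (Fin d) → Y) (hf : Measurable f)
    (σ : ℝ) (hσ : 0 < σ) (p₀ : ℝ) (hp₀ : p₀ ∈ Set.Ioo (0 : ℝ) 1)
    (x : EuclideanSpace ℝ (Fin d)) (y : Y)
    (h₁ : p₀ < smoothedConf f σ x y) (h₂ : smoothedConf f σ x y < 1)
    (δ : EuclideanSpace ℝ (Fin d))
    (hδ : ‖δ‖ < σ * (stdGaussianCDFInv (smoothedConf f σ x y) - stdGaussianCDFInv p₀)) :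
    p₀ < smoothedConf f σ (x + δ) y := by
  set A := {z | f (x + σ • z) = y}
  have hA : MeasurableSet A := (hf.comp (by fun_prop)) (measurableSet_singleton y)
  have hshift : smoothedConf f σ (x + δ) y = (stdGaussian _ ((· + σ⁻¹ • δ) ⁻¹' A)).toReal := by
    rw [smoothedConf_eq_stdGaussian hf]
    congr! 3 with z
    simp [A, smul_add, smul_inv_smul₀ hσ.ne', add_assoc, add_comm δ]
  have hlt : stdGaussianCDFInv p₀ < stdGaussianCDFInv (smoothedConf f σ x y) - ‖σ⁻¹ • δ‖ := by
    rw [norm_smul, norm_inv, Real.norm_of_nonneg hσ.le, inv_mul_eq_div, lt_sub_comm,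
      div_lt_iff₀' hσ]
    exact hδ
  rw [smoothedConf_eq_stdGaussian hf] at hlt h₁ h₂
  calc p₀ = stdGaussianCDF (stdGaussianCDFInv p₀) := (stdGaussianCDF_stdGaussianCDFInv hp₀).symm
    _ < _ := strictMono_stdGaussianCDF hlt
    _ ≤ _ := hshift ▸ stdGaussianCDF_inv_sub_norm_le_measure_preimage_add hA ⟨hp₀.1.trans h₁, h₂⟩ _

/-- certified radius for exceeding the threshold `p₀`. -/
theorem stmt_1 {d : ℕ} {Y : Type*} [Fintype Y] [MeasurableSpace Y] [MeasurableSingletonClass Y]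
    (f : EuclideanSpace ℝ (Fin d) → Y) (hf : Measurable f)
    (σ : ℝ) (hσ : 0 < σ) (p₀ : ℝ) (hp₀ : p₀ ∈ Set.Ioo (0 : ℝ) 1)
    (x : EuclideanSpace ℝ (Fin d)) (y : Y)
    (h₁ : p₀ < smoothedConf f σ x y) (h₂ : smoothedConf f σ x y < 1)
    (δ : EuclideanSpace ℝ (Fin d))
    (hδ : ‖δ‖ < σ * (stdGaussianCDFInv (smoothedConf f σ x y) - stdGaussianCDFInv p₀)) :
    p₀ < smoothedConf f σ (x + δ) y :=
  stmt_1_general f hf σ hσ p₀ hp₀ x y h₁ h₂ δ hδ
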